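/- arXiv:2006.02089 — 11 statements merged into one kernel-verified Lean document; each statement's English description precedes it below -/
import Mathlib

section
/- Packing of biletter words commutes with the right action of permutations: for packed words u, v of length n and any permutation τ ∈ S_n, pack(uτ | v) = pack(u | vτ^{-1}) · τ, where (w)σ denotes the word w_{σ(1)}...w_{σ(n)} and pack(u|v) is the packing of the biletter word with top row u and bottom row v ordered lexicographically with priority to the top letter. -/
/-!
STATEMENT 3: Packing of biletter words commutes with the right action of permutations:
for packed words u, v of length n and any τ ∈ S_n,
  pack(uτ | v) = pack(u | vτ⁻¹) · τ,
where (wσ)_i = w_{σ(i)} and pack(u|v) ranks the biletters (u_i, v_i) lexicographically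
with priority to the top letter.
-/

/-- A word `w` (of length `n`, with letters in ℕ) is packed if its letters are
exactly `{1, ..., max w}`. -/
def IsPackedWord {n : ℕ} (w : Fin n → ℕ) : Prop :=
  (∀ i, 1 ≤ w i) ∧ ∀ i, ∀ k, 1 ≤ k → k ≤ w i → ∃ j, w j = k

/-- `biPack u v i` is the rank (1-based) of the biletter `(u i, v i)` among the distinct
biletters `(u j, v j)`, in lexicographic order with priority to the top letter; i.e. the
packed word `pack(u|v)`. -/
def biPack {n : ℕ} (u v : Fin n → ℕ) : Fin n → ℕ := fun i =>
  ((Finset.univ.image fun j => (u j, v j)).filter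
    (fun p => p.1 < u i ∨ (p.1 = u i ∧ p.2 ≤ v i))).card

theorem biPack_perm_action {n : ℕ} (u v : Fin n → ℕ)
    (hu : IsPackedWord u) (hv : IsPackedWord v) (τ : Equiv.Perm (Fin n)) :
    biPack (u ∘ τ) v = fun i => biPack u (v ∘ τ.symm) (τ i) := by
  funext i
  simp only [biPack, Function.comp]
  congr 1
  ext p
  simp only [Finset.mem_filter, Finset.mem_image, Finset.mem_univ, true_and,
    Equiv.symm_apply_apply]
  constructor
  · rintro ⟨⟨j, hj⟩, hc⟩
    exact ⟨⟨τ j, by simpa using hj⟩, hc⟩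
  · rintro ⟨⟨j, hj⟩, hc⟩
    exact ⟨⟨τ.symm j, by simpa using hj⟩, hc⟩
end

section
/- The internal product on the dual basis N_u of WQSym*, defined by N_u * N_v = N_{pack(u|v)}, is associative. -/
open Finset

private lemma biPack_lt_of {n : ℕ} (u v : Fin n → ℕ) {i j : Fin n}
    (h : u j < u i ∨ (u j = u i ∧ v j < v i)) : biPack u v j < biPack u v i := by
  unfold biPack
  apply Finset.card_lt_card
  rw [Finset.ssubset_def]
  constructor
  · intro p hp
    rw [Finset.mem_filter] at hp ⊢
    refine ⟨hp.1, ?_⟩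
    rcases hp.2 with h1 | h1 <;> omega
  · intro hsub
    have hmem : (u i, v i) ∈ ((Finset.univ.image fun k => (u k, v k)).filter
        (fun p => p.1 < u i ∨ (p.1 = u i ∧ p.2 ≤ v i))) := by
      rw [Finset.mem_filter]
      exact ⟨Finset.mem_image.2 ⟨i, Finset.mem_univ i, rfl⟩, Or.inr ⟨rfl, le_refl _⟩⟩
    have h2 := hsub hmem
    rw [Finset.mem_filter] at h2
    rcases h2.2 with h1 | h1 <;> omega

private lemma biPack_eq_of {n : ℕ} (u v : Fin n → ℕ) {i j : Fin n}
    (h1 : u j = u i) (h2 : v j = v i) : biPack u v j = biPack u v i := by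
  unfold biPack
  rw [h1, h2]

private lemma biPack_lt_iff {n : ℕ} (u v : Fin n → ℕ) {i j : Fin n} :
    biPack u v j < biPack u v i ↔ (u j < u i ∨ (u j = u i ∧ v j < v i)) := by
  constructor
  · intro h
    by_contra hc
    have hd : u i < u j ∨ (u i = u j ∧ v i < v j) ∨ (u i = u j ∧ v i = v j) := by omega
    rcases hd with h1 | h1 | h1
    · have := biPack_lt_of u v (j := i) (i := j) (Or.inl h1); omega
    · have := biPack_lt_of u v (j := i) (i := j) (Or.inr h1); omega
    · have := biPack_eq_of u v h1.1 h1.2; omega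
  · exact biPack_lt_of u v

private lemma biPack_eq_iff {n : ℕ} (u v : Fin n → ℕ) {i j : Fin n} :
    biPack u v j = biPack u v i ↔ (u j = u i ∧ v j = v i) := by
  constructor
  · intro h
    by_contra hc
    have hd : (u j < u i ∨ (u j = u i ∧ v j < v i)) ∨
        (u i < u j ∨ (u i = u j ∧ v i < v j)) := by omega
    rcases hd with h1 | h1
    · have := biPack_lt_of u v h1; omega
    · have := biPack_lt_of u v (j := i) (i := j) h1; omega
  · rintro ⟨h1, h2⟩
    exact biPack_eq_of u v h1 h2

private lemma biPack_le_iff {n : ℕ} (u v : Fin n → ℕ) {i j : Fin n} :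
    biPack u v j ≤ biPack u v i ↔ (u j < u i ∨ (u j = u i ∧ v j ≤ v i)) := by
  have h1 := biPack_lt_iff u v (i := i) (j := j)
  have h2 := biPack_eq_iff u v (i := i) (j := j)
  constructor
  · intro h
    rcases Nat.lt_or_ge (biPack u v j) (biPack u v i) with hh | hh
    · rcases h1.1 hh with h3 | h3
      · exact Or.inl h3
      · exact Or.inr ⟨h3.1, h3.2.le⟩
    · have he := h2.1 (le_antisymm h hh)
      exact Or.inr ⟨he.1, he.2.le⟩
  · intro h
    rcases h with h3 | ⟨h3, h4⟩
    · exact (h1.2 (Or.inl h3)).le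
    · rcases Nat.lt_or_ge (v j) (v i) with h5 | h5
      · exact (h1.2 (Or.inr ⟨h3, h5⟩)).le
      · exact le_of_eq (h2.2 ⟨h3, le_antisymm h4 h5⟩)


theorem biPack_assoc {n : ℕ} (u v w : Fin n → ℕ)
    (hu : IsPackedWord u) (hv : IsPackedWord v) (hw : IsPackedWord w) :
    biPack (biPack u v) w = biPack u (biPack v w) := by
  classical
  funext i
  -- the common "triple lex" predicate
  have hL : biPack (biPack u v) w i =
      ((Finset.univ.filter fun j =>
          u j < u i ∨ (u j = u i ∧ (v j < v i ∨ (v j = v i ∧ w j ≤ w i)))).image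
        (fun j => (biPack u v j, w j))).card := by
    show ((Finset.univ.image fun j => (biPack u v j, w j)).filter
        (fun p => p.1 < biPack u v i ∨ (p.1 = biPack u v i ∧ p.2 ≤ w i))).card = _
    rw [Finset.filter_image]
    congr 2
    apply Finset.filter_congr
    intro j _
    simp only
    rw [biPack_lt_iff u v, biPack_eq_iff u v]
    constructor
    · rintro (h | ⟨⟨h1, h2⟩, h3⟩)
      · rcases h with h | ⟨h1, h2⟩
        · exact Or.inl h
        · exact Or.inr ⟨h1, Or.inl h2⟩
      · exact Or.inr ⟨h1, Or.inr ⟨h2, h3⟩⟩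
    · rintro (h | ⟨h1, h | ⟨h2, h3⟩⟩)
      · exact Or.inl (Or.inl h)
      · exact Or.inl (Or.inr ⟨h1, h⟩)
      · exact Or.inr ⟨⟨h1, h2⟩, h3⟩
  have hR : biPack u (biPack v w) i =
      ((Finset.univ.filter fun j =>
          u j < u i ∨ (u j = u i ∧ (v j < v i ∨ (v j = v i ∧ w j ≤ w i)))).image
        (fun j => (u j, biPack v w j))).card := by
    show ((Finset.univ.image fun j => (u j, biPack v w j)).filter
        (fun p => p.1 < u i ∨ (p.1 = u i ∧ p.2 ≤ biPack v w i))).card = _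
    rw [Finset.filter_image]
    congr 2
    apply Finset.filter_congr
    intro j _
    simp only
    rw [biPack_le_iff v w]
  rw [hL, hR]
  -- both sides equal the count of distinct triples below (u i, v i, w i)
  have hGL : ((Finset.univ.filter fun j =>
        u j < u i ∨ (u j = u i ∧ (v j < v i ∨ (v j = v i ∧ w j ≤ w i)))).image
      (fun j => (biPack u v j, w j))).card =
      ((Finset.univ.filter fun j =>
        u j < u i ∨ (u j = u i ∧ (v j < v i ∨ (v j = v i ∧ w j ≤ w i)))).image
      (fun j => (u j, v j, w j))).card := by
    have himg : (Finset.univ.filter fun j =>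
          u j < u i ∨ (u j = u i ∧ (v j < v i ∨ (v j = v i ∧ w j ≤ w i)))).image
        (fun j => (biPack u v j, w j)) =
        ((Finset.univ.filter fun j =>
          u j < u i ∨ (u j = u i ∧ (v j < v i ∨ (v j = v i ∧ w j ≤ w i)))).image
        (fun j => (u j, v j, w j))).image
        (fun t : ℕ × ℕ × ℕ =>
          (((Finset.univ.image fun k => (u k, v k)).filter
            (fun p => p.1 < t.1 ∨ (p.1 = t.1 ∧ p.2 ≤ t.2.1))).card, t.2.2)) := by
      rw [Finset.image_image]
      rfl
    rw [himg]
    rw [Finset.card_image_of_injOn]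
    rintro a ha b hb hab
    rw [Finset.mem_coe, Finset.mem_image] at ha hb
    obtain ⟨j, _, rfl⟩ := ha
    obtain ⟨k, _, rfl⟩ := hb
    have hab' : (biPack u v j, w j) = (biPack u v k, w k) := hab
    rw [Prod.mk.injEq] at hab'
    have h2 := (biPack_eq_iff u v (i := k) (j := j)).1 hab'.1
    simp only [Prod.mk.injEq]
    exact ⟨h2.1, h2.2, hab'.2⟩
  have hGR : ((Finset.univ.filter fun j =>
        u j < u i ∨ (u j = u i ∧ (v j < v i ∨ (v j = v i ∧ w j ≤ w i)))).image
      (fun j => (u j, biPack v w j))).card =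
      ((Finset.univ.filter fun j =>
        u j < u i ∨ (u j = u i ∧ (v j < v i ∨ (v j = v i ∧ w j ≤ w i)))).image
      (fun j => (u j, v j, w j))).card := by
    have himg : (Finset.univ.filter fun j =>
          u j < u i ∨ (u j = u i ∧ (v j < v i ∨ (v j = v i ∧ w j ≤ w i)))).image
        (fun j => (u j, biPack v w j)) =
        ((Finset.univ.filter fun j =>
          u j < u i ∨ (u j = u i ∧ (v j < v i ∨ (v j = v i ∧ w j ≤ w i)))).image
        (fun j => (u j, v j, w j))).image
        (fun t : ℕ × ℕ × ℕ =>
          (t.1, ((Finset.univ.image fun k => (v k, w k)).filter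
            (fun p => p.1 < t.2.1 ∨ (p.1 = t.2.1 ∧ p.2 ≤ t.2.2))).card)) := by
      rw [Finset.image_image]
      rfl
    rw [himg]
    rw [Finset.card_image_of_injOn]
    rintro a ha b hb hab
    rw [Finset.mem_coe, Finset.mem_image] at ha hb
    obtain ⟨j, _, rfl⟩ := ha
    obtain ⟨k, _, rfl⟩ := hb
    have hab' : (u j, biPack v w j) = (u k, biPack v w k) := hab
    rw [Prod.mk.injEq] at hab'
    have h2 := (biPack_eq_iff v w (i := k) (j := j)).1 hab'.2
    simp only [Prod.mk.injEq]
    exact ⟨hab'.1, h2.1, h2.2⟩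
  rw [hGL, hGR]
end

section
/- The Eulerian idempotents are orthogonal idempotents summing to the identity: in the descent algebra Σ_n (equivalently Sym_n with internal product), E_n^{[k]} * E_n^{[l]} = δ_{kl} E_n^{[k]} and Σ_{k=1}^n E_n^{[k]} = S_n, where E_n^{[k]} is the coefficient of x^k in degree n of σ_1(A)^x. -/
/-- If a "polynomial function" with module coefficients vanishes for all rational
arguments, its coefficients vanish (Vandermonde argument). -/
lemma poly_coeff_zero {R : Type*} [AddCommGroup R] [Module ℚ R] (N : ℕ)
    (a : ℕ → R) (h : ∀ x : ℚ, ∑ j ∈ Finset.range N, x ^ j • a j = 0) :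
    ∀ j < N, a j = 0 := by
  set v : Fin N → ℚ := fun i => (i : ℚ) with hv
  set M : Matrix (Fin N) (Fin N) ℚ := Matrix.vandermonde v with hM
  have hinj : Function.Injective v := by
    intro i j hij
    exact Fin.ext (Nat.cast_injective hij)
  have hdet : M.det ≠ 0 := Matrix.det_vandermonde_ne_zero_iff.2 hinj
  have hMM : M⁻¹ * M = 1 := Matrix.nonsing_inv_mul M (isUnit_iff_ne_zero.2 hdet)
  have key : ∀ i : Fin N, ∑ j' : Fin N, M i j' • a (j' : ℕ) = 0 := by
    intro i
    have := h (v i)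
    rw [← Fin.sum_univ_eq_sum_range (fun j => (v i) ^ j • a j) N] at this
    simpa [hM, Matrix.vandermonde] using this
  intro j hj
  have : a j = a ((⟨j, hj⟩ : Fin N) : ℕ) := rfl
  rw [this]
  calc a ((⟨j, hj⟩ : Fin N) : ℕ)
      = ∑ j' : Fin N, (1 : Matrix (Fin N) (Fin N) ℚ) ⟨j, hj⟩ j' • a (j' : ℕ) := by
        simp [Matrix.one_apply]
    _ = ∑ j' : Fin N, (∑ i : Fin N, M⁻¹ ⟨j, hj⟩ i * M i j') • a (j' : ℕ) := by
        rw [← hMM]; simp [Matrix.mul_apply]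
    _ = ∑ i : Fin N, M⁻¹ ⟨j, hj⟩ i • (∑ j' : Fin N, M i j' • a (j' : ℕ)) := by
        simp only [Finset.sum_smul, mul_smul, Finset.smul_sum]
        exact Finset.sum_comm
    _ = 0 := by simp [key]


/-!
STATEMENT 8: The Eulerian idempotents are orthogonal idempotents summing to the identity:
in (Sym_n, *) (anti-isomorphic to the descent algebra Σ_n),
  E_n^{[k]} * E_n^{[l]} = δ_{kl} E_n^{[k]}   and   ∑_{k=1}^n E_n^{[k]} = S_n.

We work abstractly in the algebra R = (Sym_n, *): `σ x` stands for the degree-n component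
of σ_1^x, whose defining properties are σ_1^x * σ_1^y = σ_1^{xy}, σ_1^x = ∑_k x^k E^{[k]}
(definition of the Eulerian idempotents), σ_1^1 = σ_1 (whose degree-n term S_n is the
identity of the internal product), and σ_1^0 = 1 (whose degree-n term vanishes for n ≥ 1).
-/

theorem eulerian_idempotents_orthogonal (n : ℕ) (hn : 0 < n)
    (R : Type*) [Ring R] [Algebra ℚ R]
    (σ : ℚ → R) (E : ℕ → R)
    (hmul : ∀ x y : ℚ, σ x * σ y = σ (x * y))
    (hσE : ∀ x : ℚ, σ x = ∑ k ∈ Finset.range (n + 1), x ^ k • E k)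
    (hone : σ 1 = 1)  -- S_n is the identity of the internal product on Sym_n
    (hzero : σ 0 = 0)  -- the degree-n component of σ_1^0 = 1 vanishes (n ≥ 1)
    :
    (∀ k l, k ≤ n → l ≤ n → E k * E l = if k = l then E k else 0) ∧
    (∑ k ∈ Finset.Icc 1 n, E k = σ 1) := by
  -- E 0 = 0
  have hE0 : E 0 = 0 := by
    have h0 := (hσE 0).symm.trans hzero
    rw [Finset.sum_eq_single 0 (fun k _ hk => by
      simp [zero_pow hk]) (by simp)] at h0
    simpa using h0
  -- coefficients difference
  set c : ℕ → ℕ → R := fun k l => E k * E l - (if k = l then E k else 0) with hc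
  have hmain : ∀ x y : ℚ,
      ∑ k ∈ Finset.range (n + 1), x ^ k • (∑ l ∈ Finset.range (n + 1), y ^ l • c k l) = 0 := by
    intro x y
    have h1 : σ x * σ y =
        ∑ k ∈ Finset.range (n + 1), ∑ l ∈ Finset.range (n + 1),
          x ^ k • (y ^ l • (E k * E l)) := by
      rw [hσE x, hσE y, Finset.sum_mul_sum]
      refine Finset.sum_congr rfl fun k _ => Finset.sum_congr rfl fun l _ => ?_
      rw [smul_mul_assoc, mul_smul_comm]
    have h2 : σ (x * y) =
        ∑ k ∈ Finset.range (n + 1), ∑ l ∈ Finset.range (n + 1),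
          x ^ k • (y ^ l • (if k = l then E k else 0)) := by
      rw [hσE (x * y)]
      refine Finset.sum_congr rfl fun k hk => ?_
      rw [Finset.sum_eq_single k (fun l _ hl => by simp [Ne.symm hl])
        (fun hk' => absurd hk hk')]
      simp [mul_pow, mul_smul]
    have := (h1.symm.trans (hmul x y)).trans h2
    calc ∑ k ∈ Finset.range (n + 1), x ^ k • (∑ l ∈ Finset.range (n + 1), y ^ l • c k l)
        = ∑ k ∈ Finset.range (n + 1), ∑ l ∈ Finset.range (n + 1),
            x ^ k • (y ^ l • (E k * E l))
          - ∑ k ∈ Finset.range (n + 1), ∑ l ∈ Finset.range (n + 1),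
            x ^ k • (y ^ l • (if k = l then E k else 0)) := by
          simp only [hc, smul_sub, Finset.smul_sum, Finset.sum_sub_distrib]
      _ = 0 := by rw [this, sub_self]
  have horth : ∀ k l, k ≤ n → l ≤ n → E k * E l = if k = l then E k else 0 := by
    intro k l hk hl
    have step1 : ∀ y : ℚ, ∑ l' ∈ Finset.range (n + 1), y ^ l' • c k l' = 0 := by
      intro y
      exact poly_coeff_zero (n + 1)
        (fun k' => ∑ l' ∈ Finset.range (n + 1), y ^ l' • c k' l')
        (fun x => hmain x y) k (Nat.lt_succ_of_le hk)
    have step2 : c k l = 0 :=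
      poly_coeff_zero (n + 1) (c k) step1 l (Nat.lt_succ_of_le hl)
    have := sub_eq_zero.mp step2
    exact this
  refine ⟨horth, ?_⟩
  have hsum : σ 1 = ∑ k ∈ Finset.range (n + 1), E k := by
    rw [hσE 1]; simp
  rw [hsum, Finset.sum_range_succ' E n, hE0, add_zero]
  rw [← Finset.Ico_add_one_right_eq_Icc, Finset.sum_Ico_eq_sum_range]
  simp [add_comm]
end

section
/- S_n^{[k]} = Σ_{I ⊨ n, ℓ(I) ≤ k} binom(k, ℓ(I)) S^I = Σ_{i=1}^n k^i E_n^{[i]}, where S^{[k]} = σ_1(A)^k and S_n^{[k]} is its degree-n component. -/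
/-!
STATEMENT 9: S_n^{[k]} = ∑_{I ⊨ n, ℓ(I) ≤ k} binom(k, ℓ(I)) S^I = ∑_{i=1}^n k^i E_n^{[i]},
where S^{[k]} = σ_1(A)^k and S_n^{[k]} is its degree-n component.

We realize Sym as the free algebra on generators S_1, S_2, ... (indexed by ℕ), with
S^I = S_{i_1}···S_{i_r} for a composition I of n.  The degree-n component of σ_1^k is
∑_{I ⊨ n, ℓ(I) ≤ k} binom(k, ℓ(I)) S^I (expansion of (1 + S_1 + S_2 + ⋯)^k), and the
Eulerian idempotents are defined by the expansion σ_1^x = ∑_i x^i E^{[i]} for a binomial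
element x, i.e. in degree n: ∑_{I ⊨ n} binom(x, ℓ(I)) S^I = ∑_i x^i E_n^{[i]} for all
rational x (taken as hypothesis), with binom(x, ℓ) the polynomial binomial coefficient.
-/

/-- Polynomial binomial coefficient binom(x, k) for rational x. -/
def qchoose (x : ℚ) (k : ℕ) : ℚ :=
  (∏ j ∈ Finset.range k, (x - j)) / (Nat.factorial k : ℚ)

/-- S^I = S_{i_1} ⋯ S_{i_r} in the free algebra on the S_m. -/
noncomputable def SI {m : ℕ} (I : Composition m) : FreeAlgebra ℚ ℕ :=
  (I.blocks.map (FreeAlgebra.ι ℚ)).prod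

lemma qchoose_prod (k l : ℕ) (h : l ≤ k) :
    ∏ j ∈ Finset.range l, ((k : ℚ) - j) = (k.descFactorial l : ℚ) := by
  induction l with
  | zero => simp
  | succ m ih =>
    rw [Finset.prod_range_succ, ih (Nat.le_of_succ_le h), Nat.descFactorial_succ,
      Nat.cast_mul, Nat.cast_sub (Nat.le_of_succ_le h), mul_comm]

lemma qchoose_nat (k l : ℕ) :
    qchoose (k : ℚ) l = if l ≤ k then (k.choose l : ℚ) else 0 := by
  unfold qchoose
  split_ifs with h
  · rw [qchoose_prod k l h, Nat.descFactorial_eq_factorial_mul_choose, Nat.cast_mul,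
      mul_comm, mul_div_assoc, div_self (by exact_mod_cast l.factorial_pos.ne'), mul_one]
  · have hk : k ∈ Finset.range l := Finset.mem_range.mpr (lt_of_not_ge h)
    rw [Finset.prod_eq_zero hk (by simp), zero_div]

lemma qchoose_zero_pos (l : ℕ) (h : 0 < l) : qchoose 0 l = 0 := by
  unfold qchoose
  rw [Finset.prod_eq_zero (Finset.mem_range.mpr h) (by simp), zero_div]

theorem Snk_eulerian_expansion (n : ℕ) (hn : 0 < n) (k : ℕ)
    (E : ℕ → FreeAlgebra ℚ ℕ)
    (hE : ∀ x : ℚ, ∑ I : Composition n, qchoose x I.length • SI I =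
      ∑ i ∈ Finset.range (n + 1), x ^ i • E i) :
    ∑ I ∈ Finset.univ.filter (fun I : Composition n => I.length ≤ k),
        (Nat.choose k I.length : ℚ) • SI I
      = ∑ i ∈ Finset.Icc 1 n, ((k : ℚ)) ^ i • E i := by
  -- E 0 = 0
  have hE0 : E 0 = 0 := by
    have h0 : (0 : FreeAlgebra ℚ ℕ) = ∑ i ∈ Finset.range (n + 1), (0 : ℚ) ^ i • E i := by
      rw [← hE 0]
      exact (Finset.sum_eq_zero fun I _ => by
        rw [qchoose_zero_pos _ (I.length_pos_of_pos hn), zero_smul]).symm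
    rw [Finset.sum_eq_single 0 (fun i _ hi => by rw [zero_pow hi, zero_smul]) (by simp),
      pow_zero, one_smul] at h0
    exact h0.symm
  have hk := hE (k : ℚ)
  have hL : ∑ I ∈ Finset.univ.filter (fun I : Composition n => I.length ≤ k),
      (Nat.choose k I.length : ℚ) • SI I
      = ∑ I : Composition n, qchoose (k : ℚ) I.length • SI I := by
    rw [Finset.sum_filter]
    refine Finset.sum_congr rfl fun I _ => ?_
    rw [qchoose_nat]
    split_ifs <;> simp
  rw [hL, hk]
  have : Finset.range (n + 1) = insert 0 (Finset.Icc 1 n) := by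
    ext i
    simp [Nat.lt_succ_iff, Nat.one_le_iff_ne_zero, or_iff_not_imp_left]
    omega
  rw [this, Finset.sum_insert (by simp), hE0, smul_zero, zero_add]
end

section
/- The noncommutative analogue of Worpitzky's identity: Σ_{k=1}^n x^k E_n^{[k]} = Σ_{i=1}^n binom(x + n - i, n) A(n, i), where A(n,i) = Σ_{|I|=n, ℓ(I)=i} R_I is the sum of ribbon functions over compositions of n with i parts. -/
/-- The descent set of a composition of n, a subset of {1, ..., n-1}. -/
def desSet {n : ℕ} (I : Composition n) : Finset (Fin (n - 1)) :=
  compositionAsSetEquiv n (compositionEquiv n I)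

/-- Ribbon basis: R_I = ∑_{J coarser than I} (-1)^{ℓ(I) - ℓ(J)} S^J. -/
noncomputable def ribbon {n : ℕ} (I : Composition n) : FreeAlgebra ℚ ℕ :=
  ∑ J ∈ Finset.univ.filter (fun J : Composition n => desSet J ⊆ desSet I),
    ((-1 : ℚ)) ^ (I.length - J.length) • SI J

/-- Noncommutative Eulerian coefficient A(n, i) = ∑_{I ⊨ n, ℓ(I) = i} R_I. -/
noncomputable def eulA (n i : ℕ) : FreeAlgebra ℚ ℕ :=
  ∑ I ∈ Finset.univ.filter (fun I : Composition n => I.length = i), ribbon I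


lemma qchoose_pascal (z : ℚ) (k : ℕ) :
    qchoose z (k+1) - qchoose (z-1) (k+1) = qchoose (z-1) k := by
  unfold qchoose
  have h1 : ∏ j ∈ Finset.range (k+1), (z - j) = (∏ j ∈ Finset.range k, ((z-1) - j)) * z := by
    rw [Finset.prod_range_succ']
    push_cast
    congr 1
    · exact Finset.prod_congr rfl fun j _ => by push_cast; ring
    · push_cast; ring
  have h2 : ∏ j ∈ Finset.range (k+1), ((z-1) - j)
      = (∏ j ∈ Finset.range k, ((z-1) - j)) * ((z-1) - k) := Finset.prod_range_succ _ _
  rw [h1, h2, Nat.factorial_succ]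
  have hk : (Nat.factorial k : ℚ) ≠ 0 := by exact_mod_cast Nat.factorial_ne_zero k
  have hk1 : ((k:ℚ) + 1) ≠ 0 := by positivity
  push_cast
  field_simp
  ring

lemma qchoose_zero_pos_s10 (k : ℕ) (hk : 0 < k) : qchoose 0 k = 0 := by
  unfold qchoose
  rw [Finset.prod_eq_zero (Finset.mem_range.2 hk)]
  · simp
  · simp

lemma mem_casEquiv {n : ℕ} (c : CompositionAsSet n) (i : Fin (n-1)) (h : 1 + (i:ℕ) < n+1) :
    i ∈ compositionAsSetEquiv n c ↔ (⟨1+i, h⟩ : Fin (n+1)) ∈ c.boundaries := by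
  simp [compositionAsSetEquiv]

lemma casEquiv_card {n : ℕ} (hn : 0 < n) (c : CompositionAsSet n) :
    (compositionAsSetEquiv n c).card + 2 = c.boundaries.card := by
  have hf : ∀ i : Fin (n-1), 1 + (i:ℕ) < n + 1 := by
    intro i; have := i.2; omega
  set f : Fin (n-1) → Fin (n+1) := fun i => ⟨1 + i, hf i⟩ with hfdef
  have hinj : Function.Injective f := by
    intro a b h
    apply Fin.ext
    have := congrArg Fin.val h
    simp only [hfdef] at this
    omega
  have himg : (compositionAsSetEquiv n c).image f
      = (c.boundaries.erase (Fin.last n)).erase 0 := by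
    ext b
    simp only [Finset.mem_image, Finset.mem_erase]
    constructor
    · rintro ⟨i, hi, rfl⟩
      rw [mem_casEquiv c i (hf i)] at hi
      have h2 := i.2
      refine ⟨?_, ?_, hi⟩
      · intro h; have := congrArg Fin.val h; simp [hfdef] at this
      · intro h; have := congrArg Fin.val h; simp [hfdef, Fin.val_last] at this; omega
    · rintro ⟨hb0, hbl, hb⟩
      have hbv : (b:ℕ) ≠ 0 := fun h => hb0 (Fin.ext (by simpa using h))
      have hbl' : (b:ℕ) ≠ n := fun h => hbl (Fin.ext (by simpa [Fin.val_last] using h))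
      have h2 := b.2
      refine ⟨⟨(b:ℕ) - 1, by omega⟩, ?_, ?_⟩
      · rw [mem_casEquiv c _ (hf _)]
        convert hb using 1
        apply Fin.ext
        simp
        omega
      · apply Fin.ext
        simp [hfdef]
        omega
  have hcard : (compositionAsSetEquiv n c).card
      = ((c.boundaries.erase (Fin.last n)).erase 0).card := by
    rw [← himg, Finset.card_image_of_injective _ hinj]
  have h0l : (0 : Fin (n+1)) ≠ Fin.last n := by
    intro h; have := congrArg Fin.val h; simp [Fin.val_last] at this; omega
  have h0mem : (0 : Fin (n+1)) ∈ c.boundaries.erase (Fin.last n) :=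
    Finset.mem_erase.2 ⟨h0l, c.zero_mem⟩
  have hlmem : Fin.last n ∈ c.boundaries := c.getLast_mem
  rw [hcard, Finset.card_erase_of_mem h0mem, Finset.card_erase_of_mem hlmem]
  have : 2 ≤ c.boundaries.card := by
    have hsub : ({0, Fin.last n} : Finset (Fin (n+1))) ⊆ c.boundaries := by
      intro b hb
      rcases Finset.mem_insert.1 hb with rfl | hb
      · exact c.zero_mem
      · rw [Finset.mem_singleton] at hb; subst hb; exact c.getLast_mem
    have := Finset.card_le_card hsub
    rwa [Finset.card_pair h0l] at this
  omega

lemma desSet_card {n : ℕ} (hn : 0 < n) (I : Composition n) :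
    I.length = (desSet I).card + 1 := by
  have h := casEquiv_card hn (compositionEquiv n I)
  have h2 : (compositionEquiv n I).boundaries.card = I.length + 1 := by
    rw [show compositionEquiv n I = I.toCompositionAsSet from rfl,
      Composition.toCompositionAsSet_boundaries]
    exact I.card_boundaries_eq_succ_length
  unfold desSet
  omega

lemma alt_sum (N : ℕ) : ∀ m : ℕ, m ≤ N → ∀ y : ℚ,
    ∑ j ∈ Finset.range (m+1), (-1:ℚ)^j * (m.choose j) * qchoose (y - j) N
      = qchoose (y - m) (N - m) := by
  intro m
  induction m with
  | zero =>
    intro _ y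
    simp [qchoose]
  | succ m ih =>
    intro hm y
    have key : ∑ j ∈ Finset.range (m+2), (-1:ℚ)^j * ((m+1).choose j) * qchoose (y - j) N
        = (∑ j ∈ Finset.range (m+1), (-1:ℚ)^j * (m.choose j) * qchoose (y - j) N)
          - ∑ j ∈ Finset.range (m+1), (-1:ℚ)^j * (m.choose j) * qchoose ((y-1) - j) N := by
      rw [Finset.sum_range_succ' (fun j => (-1:ℚ)^j * ((m+1).choose j) * qchoose (y - j) N) (m+1)]
      have split : ∀ j ∈ Finset.range (m+1),
          (-1:ℚ)^(j+1) * ((m+1).choose (j+1)) * qchoose (y - ((j+1:ℕ):ℚ)) N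
          = (-(-1:ℚ)^j * (m.choose j) * qchoose ((y-1) - j) N)
            + (-1:ℚ)^(j+1) * (m.choose (j+1)) * qchoose (y - ((j+1:ℕ):ℚ)) N := by
        intro j _
        rw [Nat.choose_succ_succ]
        have : y - ((j:ℚ)+1) = (y-1) - j := by ring
        push_cast
        rw [this]
        ring
      rw [Finset.sum_congr rfl split, Finset.sum_add_distrib]
      have hB : ∑ j ∈ Finset.range (m+1), (-1:ℚ)^(j+1) * (m.choose (j+1)) * qchoose (y - ((j+1:ℕ):ℚ)) N
          = (∑ j ∈ Finset.range (m+1), (-1:ℚ)^j * (m.choose j) * qchoose (y - j) N)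
            - qchoose y N := by
        rw [Finset.sum_range_succ' (fun j => (-1:ℚ)^j * (m.choose j) * qchoose (y - j) N) m,
          Finset.sum_range_succ]
        simp [Nat.choose_succ_self]
      have hA : ∑ j ∈ Finset.range (m+1), (-(-1:ℚ)^j * (m.choose j) * qchoose ((y-1) - j) N)
          = - ∑ j ∈ Finset.range (m+1), (-1:ℚ)^j * (m.choose j) * qchoose ((y-1) - j) N := by
        rw [← Finset.sum_neg_distrib]
        exact Finset.sum_congr rfl fun j _ => by ring
      rw [hA, hB]
      have h0 : (-1:ℚ)^0 * ((m+1).choose 0) * qchoose (y - (0:ℕ)) N = qchoose y N := by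
        simp
      rw [h0]
      ring
    rw [key, ih (le_of_lt hm) y, ih (le_of_lt hm) (y-1)]
    have hNm : N - m = (N - (m+1)) + 1 := by omega
    rw [hNm]
    have : (y - 1) - m = (y - m) - 1 := by ring
    rw [this, qchoose_pascal (y - m) (N - (m+1))]
    congr 1
    push_cast
    ring

noncomputable def eInv (n : ℕ) (D : Finset (Fin (n-1))) : Composition n :=
  (compositionEquiv n).symm ((compositionAsSetEquiv n).symm D)

lemma desSet_eInv (n : ℕ) (D : Finset (Fin (n-1))) : desSet (eInv n D) = D := by
  simp [desSet, eInv]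

lemma eInv_desSet (n : ℕ) (I : Composition n) : eInv n (desSet I) = I := by
  simp [desSet, eInv]

/-- The key coefficient identity. -/
lemma coeff_identity (n : ℕ) (hn : 0 < n) (x : ℚ) (J : Composition n) :
    ∑ I ∈ Finset.univ.filter (fun I : Composition n => desSet J ⊆ desSet I),
      qchoose (x + n - I.length) n * (-1:ℚ) ^ (I.length - J.length)
      = qchoose x J.length := by
  set D₀ := desSet J with hD₀
  set d := D₀.card with hd
  have hJlen : J.length = d + 1 := desSet_card hn J
  have hdle : d ≤ n - 1 := by
    rw [hd]
    simpa using Finset.card_le_univ D₀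
  -- rewrite lengths via desSet cards
  have step1 : ∑ I ∈ Finset.univ.filter (fun I : Composition n => desSet J ⊆ desSet I),
      qchoose (x + n - I.length) n * (-1:ℚ) ^ (I.length - J.length)
      = ∑ D ∈ Finset.univ.filter (fun D : Finset (Fin (n-1)) => D₀ ⊆ D),
        qchoose (x + n - (D.card + 1)) n * (-1:ℚ) ^ ((D.card + 1) - (d + 1)) := by
    apply Finset.sum_nbij' (fun I => desSet I) (fun D => eInv n D)
    · intro I hI
      simp only [Finset.mem_filter, Finset.mem_univ, true_and] at hI ⊢
      exact hI
    · intro D hD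
      simp only [Finset.mem_filter, Finset.mem_univ, true_and] at hD ⊢
      rwa [desSet_eInv]
    · intro I _; exact eInv_desSet n I
    · intro D _; exact desSet_eInv n D
    · intro I _
      rw [desSet_card hn I, hJlen]
      push_cast
      ring_nf
  rw [step1]
  -- bijection with powerset of complement
  have step2 : ∑ D ∈ Finset.univ.filter (fun D : Finset (Fin (n-1)) => D₀ ⊆ D),
        qchoose (x + n - (D.card + 1)) n * (-1:ℚ) ^ ((D.card + 1) - (d + 1))
      = ∑ T ∈ D₀ᶜ.powerset,
        qchoose (x + n - ((d + T.card) + 1)) n * (-1:ℚ) ^ (((d + T.card) + 1) - (d + 1)) := by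
    apply Finset.sum_nbij' (fun D => D \ D₀) (fun T => D₀ ∪ T)
    · intro D hD
      simp only [Finset.mem_filter, Finset.mem_univ, true_and] at hD
      rw [Finset.mem_powerset]
      intro a ha
      rw [Finset.mem_sdiff] at ha
      simp [Finset.mem_compl, ha.2]
    · intro T hT
      simp only [Finset.mem_filter, Finset.mem_univ, true_and]
      exact Finset.subset_union_left
    · intro D hD
      simp only [Finset.mem_filter, Finset.mem_univ, true_and] at hD
      exact Finset.union_sdiff_of_subset hD
    · intro T hT
      rw [Finset.mem_powerset] at hT
      apply Finset.union_sdiff_cancel_left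
      rw [Finset.disjoint_left]
      intro a haD haT
      exact (Finset.mem_compl.1 (hT haT)) haD
    · intro D hD
      simp only [Finset.mem_filter, Finset.mem_univ, true_and] at hD
      have hdisj : Disjoint D₀ (D \ D₀) := Finset.disjoint_sdiff
      have : (D₀ ∪ (D \ D₀)).card = d + (D \ D₀).card := by
        rw [Finset.card_union_of_disjoint hdisj, hd]
      rw [Finset.union_sdiff_of_subset hD] at this
      rw [this]
      push_cast
      ring_nf
  rw [step2]
  -- group by cardinality
  rw [Finset.sum_powerset_apply_card
    (fun j => qchoose (x + n - ((d + j) + 1)) n * (-1:ℚ) ^ (((d + j) + 1) - (d + 1)))]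
  set m := D₀ᶜ.card with hm
  have hmval : m = (n - 1) - d := by
    rw [hm, Finset.card_compl, Fintype.card_fin, hd]
  have hmn : m ≤ n := by omega
  set y : ℚ := x + n - (d + 1) with hy
  have step3 : ∑ j ∈ Finset.range (m+1),
      m.choose j • (qchoose (x + n - ((d + j) + 1)) n * (-1:ℚ) ^ (((d + j) + 1) - (d + 1)))
      = ∑ j ∈ Finset.range (m+1), (-1:ℚ)^j * (m.choose j) * qchoose (y - j) n := by
    apply Finset.sum_congr rfl
    intro j _
    have he : ((d + j) + 1) - (d + 1) = j := by omega
    have hq : qchoose (x + n - ((d:ℚ) + j + 1)) n = qchoose (y - j) n := by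
      congr 1
      rw [hy]
      push_cast
      ring
    rw [he, hq, nsmul_eq_mul]
    ring
  rw [step3, alt_sum n m hmn y]
  have hnm : n - m = d + 1 := by omega
  have hcast : ((m : ℕ) : ℚ) = (n : ℚ) - 1 - d := by
    rw [hmval]
    rw [Nat.cast_sub hdle, Nat.cast_sub (by omega : 1 ≤ n)]
    norm_num
  have hyx : y - m = x := by
    rw [hy, hcast]
    push_cast
    ring
  rw [hnm, hyx, hJlen]

theorem noncommutative_worpitzky (n : ℕ) (hn : 0 < n)
    (E : ℕ → FreeAlgebra ℚ ℕ)
    (hE : ∀ x : ℚ, ∑ I : Composition n, qchoose x I.length • SI I =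
      ∑ k ∈ Finset.range (n + 1), x ^ k • E k) :
    ∀ x : ℚ,
      ∑ k ∈ Finset.Icc 1 n, x ^ k • E k
        = ∑ i ∈ Finset.Icc 1 n, qchoose (x + n - i) n • eulA n i := by
  have hE0 : E 0 = 0 := by
    have h := hE 0
    have hL : ∑ I : Composition n, qchoose 0 I.length • SI I = 0 := by
      apply Finset.sum_eq_zero
      intro I _
      rw [qchoose_zero_pos_s10 _ (I.length_pos_of_pos hn), zero_smul]
    have hR : ∑ k ∈ Finset.range (n + 1), (0:ℚ) ^ k • E k = E 0 := by
      rw [Finset.sum_eq_single_of_mem 0 (Finset.mem_range.2 (by omega))]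
      · simp
      · intro k _ hk
        rw [zero_pow hk, zero_smul]
    rw [hL] at h
    rw [← hR, ← h]
  intro x
  have hrange : Finset.range (n+1) = insert 0 (Finset.Icc 1 n) := by
    ext k; simp; omega
  have hLHS : ∑ k ∈ Finset.Icc 1 n, x ^ k • E k
      = ∑ I : Composition n, qchoose x I.length • SI I := by
    rw [hE x, hrange, Finset.sum_insert (by simp), hE0]
    simp
  rw [hLHS]
  -- now expand the RHS
  have hR1 : ∑ i ∈ Finset.Icc 1 n, qchoose (x + n - i) n • eulA n i
      = ∑ I : Composition n, qchoose (x + n - I.length) n • ribbon I := by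
    have h1 : ∀ i ∈ Finset.Icc 1 n, qchoose (x + n - i) n • eulA n i
        = ∑ I ∈ Finset.univ.filter (fun I : Composition n => I.length = i),
            qchoose (x + n - I.length) n • ribbon I := by
      intro i hi
      unfold eulA
      rw [Finset.smul_sum]
      apply Finset.sum_congr rfl
      intro I hI
      rw [(Finset.mem_filter.1 hI).2]
    rw [Finset.sum_congr rfl h1]
    apply Finset.sum_fiberwise_of_maps_to
    intro I _
    rw [Finset.mem_Icc]
    exact ⟨I.length_pos_of_pos hn, I.length_le⟩
  rw [hR1]
  have hR2 : ∑ I : Composition n, qchoose (x + n - I.length) n • ribbon I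
      = ∑ J : Composition n,
          (∑ I ∈ Finset.univ.filter (fun I : Composition n => desSet J ⊆ desSet I),
            qchoose (x + n - I.length) n * (-1:ℚ) ^ (I.length - J.length)) • SI J := by
    unfold ribbon
    rw [Finset.sum_congr rfl (fun I _ => Finset.smul_sum)]
    rw [Finset.sum_congr rfl (fun I _ => Finset.sum_congr rfl (fun J _ => smul_smul _ _ _))]
    rw [Finset.sum_congr rfl (fun I (_ : I ∈ Finset.univ) => Finset.sum_filter
      (fun J => desSet J ⊆ desSet I)
      (fun J => (qchoose (x + n - I.length) n * (-1:ℚ) ^ (I.length - J.length)) • SI J))]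
    rw [Finset.sum_comm]
    apply Finset.sum_congr rfl
    intro J _
    rw [← Finset.sum_filter (fun I => desSet J ⊆ desSet I)
      (fun I => (qchoose (x + n - I.length) n * (-1:ℚ) ^ (I.length - J.length)) • SI J)]
    rw [Finset.sum_smul]
  rw [hR2]
  apply Finset.sum_congr rfl
  intro J _
  rw [coeff_identity n hn x J]
end

section
/- For a composition I = (i_1,...,i_r) of n, K_I := S^I * E^{[ℓ(I)]} satisfies K_I(kA) = k^{ℓ(I)} K_I(A) for all integers k; in other words K_I is an eigenvector of the algebra morphism ψ_k: f(A) ↦ f(kA) with eigenvalue k^{ℓ(I)}. -/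
/-- If a polynomial-type family with module coefficients vanishes at all rationals,
its coefficients vanish. -/
lemma vanish_coeffs {R : Type*} [AddCommGroup R] [Module ℚ R] (m : ℕ) (c : ℕ → R)
    (h : ∀ x : ℚ, ∑ r ∈ Finset.range m, x ^ r • c r = 0) :
    ∀ r < m, c r = 0 := by
  intro r hr
  set V : Matrix (Fin m) (Fin m) ℚ := Matrix.vandermonde (fun i : Fin m => (i : ℚ)) with hV
  have hdet : IsUnit V.det := by
    rw [isUnit_iff_ne_zero]
    apply Matrix.det_vandermonde_ne_zero_iff.mpr
    intro i j hij
    have : ((i : ℕ) : ℚ) = ((j : ℕ) : ℚ) := hij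
    exact Fin.ext (by exact_mod_cast this)
  have hWV : V⁻¹ * V = 1 := Matrix.nonsing_inv_mul V hdet
  have heq : ∀ i : Fin m, ∑ j : Fin m, V i j • c j = 0 := by
    intro i
    have := h ((i : ℕ) : ℚ)
    rw [Finset.sum_range] at this
    simpa [hV, Matrix.vandermonde] using this
  have key : c r = ∑ j : Fin m, (V⁻¹ * V) (⟨r, hr⟩ : Fin m) j • c j := by
    rw [hWV]
    simp [Matrix.one_apply, Finset.sum_ite_eq']
  rw [key]
  calc ∑ j : Fin m, (V⁻¹ * V) (⟨r, hr⟩ : Fin m) j • c j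
      = ∑ j : Fin m, ∑ i : Fin m, (V⁻¹ (⟨r, hr⟩ : Fin m) i * V i j) • c j := by
        simp [Matrix.mul_apply, Finset.sum_smul]
    _ = ∑ i : Fin m, V⁻¹ (⟨r, hr⟩ : Fin m) i • ∑ j : Fin m, V i j • c j := by
        rw [Finset.sum_comm]
        simp [Finset.smul_sum, mul_smul]
    _ = 0 := by simp [heq]

theorem KI_eigenvector (n : ℕ) (R : Type*) [Ring R] [Algebra ℚ R]
    (σ : ℚ → R) (E : ℕ → R)
    (hmul : ∀ x y : ℚ, σ x * σ y = σ (x * y))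
    (hσE : ∀ x : ℚ, σ x = ∑ r ∈ Finset.range (n + 1), x ^ r • E r)
    (SI : Composition n → R) (I : Composition n) :
    ∀ k : ℤ, (SI I * E I.length) * σ (k : ℚ) =
      ((k : ℚ) ^ I.length) • (SI I * E I.length) := by
  intro k
  set y : ℚ := (k : ℚ)
  -- Key: E r * σ y = y ^ r • E r for r ≤ n.
  have hE : ∀ r < n + 1, E r * σ y = y ^ r • E r := by
    have h := vanish_coeffs (n + 1) (fun r => E r * σ y - y ^ r • E r) ?_
    · intro r hr
      have := h r hr
      simpa [sub_eq_zero] using this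
    · intro x
      have h1 : σ x * σ y = σ (x * y) := hmul x y
      rw [hσE x, hσE (x * y), Finset.sum_mul] at h1
      have h2 : ∑ r ∈ Finset.range (n + 1), x ^ r • (E r * σ y)
          = ∑ r ∈ Finset.range (n + 1), x ^ r • (y ^ r • E r) := by
        calc ∑ r ∈ Finset.range (n + 1), x ^ r • (E r * σ y)
            = ∑ r ∈ Finset.range (n + 1), (x ^ r • E r) * σ y := by
              simp [smul_mul_assoc]
          _ = ∑ r ∈ Finset.range (n + 1), (x * y) ^ r • E r := h1
          _ = ∑ r ∈ Finset.range (n + 1), x ^ r • (y ^ r • E r) := by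
              simp [mul_pow, mul_smul]
      calc ∑ r ∈ Finset.range (n + 1), x ^ r • (E r * σ y - y ^ r • E r)
          = ∑ r ∈ Finset.range (n + 1), (x ^ r • (E r * σ y) - x ^ r • (y ^ r • E r)) := by
            simp [smul_sub]
        _ = 0 := by rw [Finset.sum_sub_distrib, h2, sub_self]
  have hlen : I.length < n + 1 := Nat.lt_succ_of_le I.length_le
  rw [mul_assoc, hE I.length hlen, mul_smul_comm]
end

section
/- K_I = Σ_{J ≥ I} ((-1)^{ℓ(J)-ℓ(I)} / ℓ(J,I)) S^J, where the sum is over compositions J refining I, J decomposes as a concatenation J = J_1···J_r with J_p ⊨ i_p, and ℓ(J,I) = Π_p ℓ(J_p). -/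
open Polynomial Finset
open scoped Nat

section Coefficients

variable {K V : Type*} [Field K] [AddCommGroup V] [Module K V]

theorem sum_eval_smul_eq_sum_range_pow_smul {ι : Type*} [Fintype ι] {N : ℕ} (P : ι → K[X])
    (hP : ∀ i, (P i).natDegree < N) (v : ι → V) (x : K) :
    ∑ i, (P i).eval x • v i = ∑ j ∈ range N, x ^ j • ∑ i, (P i).coeff j • v i := by
  simp_rw [fun i => eval_eq_sum_range' (hP i) x, Finset.sum_smul, Finset.smul_sum, smul_smul]
  rw [Finset.sum_comm]
  simp_rw [mul_comm]

theorem eq_of_forall_sum_range_pow_smul_eq [Infinite K] {N : ℕ} {c d : ℕ → V}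
    (h : ∀ x : K, ∑ j ∈ range N, x ^ j • c j = ∑ j ∈ range N, x ^ j • d j)
    {j : ℕ} (hj : j < N) : c j = d j := by
  rw [← sub_eq_zero, ← Module.forall_dual_apply_eq_zero_iff K]
  intro f
  set p : K[X] := ∑ i ∈ range N, C (f (c i - d i)) * X ^ i
  have hp : p = 0 := Polynomial.funext fun x => by
    have := congrArg f (sub_eq_zero.2 (h x))
    simpa [p, eval_finsetSum, ← Finset.sum_sub_distrib, ← smul_sub, mul_comm] using this
  have hj' := congrArg (coeff · j) hp
  simpa only [p, finsetSum_coeff, coeff_C_mul_X_pow, Finset.sum_ite_eq, mem_range, hj, if_true,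
    coeff_zero] using hj'

end Coefficients

theorem coeff_prod_eq_prod_coeff_one {R ι : Type*} [CommSemiring R] [Fintype ι] (P : ι → R[X])
    (hP : ∀ i, (P i).coeff 0 = 0) :
    (∏ i, P i).coeff (Fintype.card ι) = ∏ i, (P i).coeff 1 := by
  have hX : ∀ i, P i = X * divX (P i) := fun i => by
    simpa [hP i] using (X_mul_divX_add (P i)).symm
  rw [Finset.prod_congr rfl fun i _ => hX i, Finset.prod_mul_distrib, Finset.prod_const,
    Finset.card_univ, coeff_X_pow_mul', if_pos le_rfl, Nat.sub_self, coeff_zero_prod]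
  simp [coeff_divX]

theorem descPochhammer_eval_neg_one {R : Type*} [CommRing R] (k : ℕ) :
    (descPochhammer R k).eval (-1) = (-1) ^ k * k ! := by
  have := ascPochhammer_eval_neg_eq_descPochhammer R (-1) k
  rw [neg_neg, ascPochhammer_eval_one] at this
  rw [this, ← mul_assoc, ← mul_pow, neg_one_mul, neg_neg, one_pow, one_mul]

theorem descPochhammer_coeff_one {R : Type*} [CommRing R] (k : ℕ) :
    (descPochhammer R (k + 1)).coeff 1 = (-1) ^ k * k ! := by
  rw [descPochhammer_succ_left, coeff_X_mul, coeff_zero_eq_eval_zero, eval_comp, eval_sub,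
    eval_X, eval_one, zero_sub, descPochhammer_eval_neg_one]

noncomputable def binomialPoly (k : ℕ) : ℚ[X] :=
  C ((k ! : ℚ)⁻¹) * descPochhammer ℚ k

theorem binomialPoly_eval (x : ℚ) (k : ℕ) : (binomialPoly k).eval x = qchoose x k := by
  rw [binomialPoly, eval_C_mul, descPochhammer_eval_eq_prod_range, qchoose, inv_mul_eq_div]

theorem binomialPoly_natDegree_le (k : ℕ) : (binomialPoly k).natDegree ≤ k :=
  natDegree_C_mul_le _ _ |>.trans (descPochhammer_natDegree ℚ k).le

theorem binomialPoly_coeff_zero {k : ℕ} (hk : k ≠ 0) : (binomialPoly k).coeff 0 = 0 := by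
  rw [binomialPoly, coeff_C_mul, coeff_zero_eq_eval_zero, descPochhammer_ne_zero_eval_zero ℚ hk,
    mul_zero]

theorem binomialPoly_coeff_one {k : ℕ} (hk : k ≠ 0) :
    (binomialPoly k).coeff 1 = (-1) ^ (k - 1) / k := by
  obtain ⟨k, rfl⟩ := Nat.exists_eq_succ_of_ne_zero hk
  rw [binomialPoly, coeff_C_mul, descPochhammer_coeff_one, Nat.succ_sub_one, Nat.factorial_succ]
  push_cast
  field_simp

theorem coeff_prod_binomialPoly {r : ℕ} (k : Fin r → ℕ) (hk : ∀ p, k p ≠ 0) :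
    (∏ p, binomialPoly (k p)).coeff r = (-1) ^ (∑ p, k p - r) / ∏ p, (k p : ℚ) := by
  have hr : ∑ p, k p - r = ∑ p, (k p - 1) := by
    rw [Finset.sum_tsub_distrib _ fun p _ => Nat.one_le_iff_ne_zero.2 (hk p)]
    simp
  have hcoeff := coeff_prod_eq_prod_coeff_one _ fun p => binomialPoly_coeff_zero (hk p)
  rw [Fintype.card_fin] at hcoeff
  rw [hcoeff, Finset.prod_congr rfl fun p _ => binomialPoly_coeff_one (hk p), Finset.prod_div_distrib,
    Finset.prod_pow_eq_pow_sum, hr]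

theorem list_prod_ofFn_sum_smul {R A : Type*} [CommSemiring R] [Semiring A] [Algebra R A]
    {r : ℕ} {κ : Fin r → Type*} [∀ p, Fintype (κ p)] (c : ∀ p, κ p → R) (v : ∀ p, κ p → A) :
    (List.ofFn fun p => ∑ j, c p j • v p j).prod =
      ∑ L : ∀ p, κ p, (∏ p, c p (L p)) • (List.ofFn fun p => v p (L p)).prod := by
  classical
  simp only [← MultilinearMap.mkPiAlgebraFin_apply (R := R), MultilinearMap.map_sum,
    MultilinearMap.map_smul_univ]

theorem SI_eq_prod_ofFn {m : ℕ} (I : Composition m) :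
    SI I = (List.ofFn fun p : Fin I.blocks.length => FreeAlgebra.ι ℚ (I.blocks.get p)).prod := by
  conv_lhs => rw [SI, ← List.ofFn_get I.blocks, List.map_ofFn]
  rfl

theorem map_SI {m : ℕ} (I : Composition m) (f : FreeAlgebra ℚ ℕ →ₐ[ℚ] FreeAlgebra ℚ ℕ)
    (a : ℕ → ℚ) (hf : ∀ k, 0 < k → f (FreeAlgebra.ι ℚ k) = ∑ H : Composition k, a H.length • SI H) :
    f (SI I) = ∑ L : (∀ p : Fin I.blocks.length, Composition (I.blocks.get p)),
      (∏ p, a (L p).length) • (List.ofFn fun p => SI (L p)).prod := by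
  rw [SI_eq_prod_ofFn, map_list_prod, List.map_ofFn]
  simp_rw [Function.comp_def, hf _ (I.blocks_pos (List.get_mem _ _))]
  exact list_prod_ofFn_sum_smul _ _

theorem Composition.sum_length_le {m : ℕ} (I : Composition m)
    (L : ∀ p : Fin I.blocks.length, Composition (I.blocks.get p)) :
    ∑ p, (L p).length ≤ m :=
  (Finset.sum_le_sum fun p _ => (L p).length_le).trans_eq I.sum_blocksFun

theorem KI_expansion_general (n : ℕ) (I : Composition n)
    (Ψ : ℚ → (FreeAlgebra ℚ ℕ →ₐ[ℚ] FreeAlgebra ℚ ℕ))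
    (hΨ : ∀ (x : ℚ) (m : ℕ), 0 < m → Ψ x (FreeAlgebra.ι ℚ m) =
      ∑ H : Composition m, qchoose x H.length • SI H)
    (C : ℕ → FreeAlgebra ℚ ℕ)  -- C j = S^I * E^{[j]}
    (hC : ∀ x : ℚ, Ψ x (SI I) = ∑ j ∈ Finset.range (n + 1), x ^ j • C j) :
    C I.length =
      ∑ L : (∀ p : Fin I.blocks.length, Composition (I.blocks.get p)),
        (((-1 : ℚ) ^ ((∑ p, (L p).length) - I.length)) / (∏ p, ((L p).length : ℚ))) •
          (List.ofFn fun p => SI (L p)).prod := by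
  set P := fun L : (∀ p : Fin I.blocks.length, Composition (I.blocks.get p)) =>
    ∏ p, binomialPoly (L p).length
  have hdeg : ∀ L, (P L).natDegree < n + 1 := fun L =>
    ((natDegree_prod_le _ _).trans (Finset.sum_le_sum fun p _ => binomialPoly_natDegree_le _)
      |>.trans (I.sum_length_le L)).trans_lt n.lt_succ_self
  have hexp (x : ℚ) : Ψ x (SI I) = ∑ L, (P L).eval x • (List.ofFn fun p => SI (L p)).prod := by
    simp only [map_SI I (Ψ x) _ (hΨ x), P, eval_prod, binomialPoly_eval]
  have hcoeff : C I.length = ∑ L, (P L).coeff I.length • (List.ofFn fun p => SI (L p)).prod :=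
    eq_of_forall_sum_range_pow_smul_eq (d := fun j => ∑ L, (P L).coeff j • _)
      (fun x => by rw [← hC, hexp, sum_eval_smul_eq_sum_range_pow_smul P hdeg])
      (I.length_le.trans_lt n.lt_succ_self)
  rw [hcoeff]
  refine Finset.sum_congr rfl fun L _ => ?_
  rw [coeff_prod_binomialPoly _ fun p =>
    ((L p).length_pos_of_pos (I.blocks_pos (List.get_mem _ _))).ne']

theorem KI_expansion (n : ℕ) (hn : 0 < n) (I : Composition n)
    (Ψ : ℚ → (FreeAlgebra ℚ ℕ →ₐ[ℚ] FreeAlgebra ℚ ℕ))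
    (hΨ : ∀ (x : ℚ) (m : ℕ), 0 < m → Ψ x (FreeAlgebra.ι ℚ m) =
      ∑ H : Composition m, qchoose x H.length • SI H)
    (C : ℕ → FreeAlgebra ℚ ℕ)  -- C j = S^I * E^{[j]}
    (hC : ∀ x : ℚ, Ψ x (SI I) = ∑ j ∈ Finset.range (n + 1), x ^ j • C j) :
    C I.length =
      ∑ L : (∀ p : Fin I.blocks.length, Composition (I.blocks.get p)),
        (((-1 : ℚ) ^ ((∑ p, (L p).length) - I.length)) / (∏ p, ((L p).length : ℚ))) •
          (List.ofFn fun p => SI (L p)).prod :=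
  KI_expansion_general n I Ψ hΨ C hC
end

section
/- For all integers k, S^I(kA) = Σ_{J ≥ I} β_k(J, I) S^J, where β_k(J,I) = Π_p binom(k, ℓ(J_p)) and J = J_1···J_2···J_r is the decomposition of the refinement J of I into compositions J_p of i_p. -/
lemma aux (c : ℚ) (F : ℕ → FreeAlgebra ℚ ℕ) (l : List ℕ)
    (h : ∀ m ∈ l, F m = ∑ H : Composition m, qchoose c H.length • SI H) :
    (l.map F).prod =
      ∑ L : (∀ p : Fin l.length, Composition (l.get p)),
        (∏ p, qchoose c (L p).length) • (List.ofFn fun p => SI (L p)).prod := by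
  induction l with
  | nil => simp
  | cons a t ih =>
    have key := Fintype.sum_equiv
      (Fin.consEquiv fun p : Fin (a::t).length => Composition ((a::t).get p))
      (fun pr : Composition a × (∀ p : Fin t.length, Composition (t.get p)) =>
        (qchoose c pr.1.length • SI pr.1) *
          ((∏ p, qchoose c ((pr.2) p).length) • (List.ofFn fun p => SI (pr.2 p)).prod))
      (fun L : ∀ p : Fin (a::t).length, Composition ((a::t).get p) =>
        (∏ p, qchoose c (L p).length) • (List.ofFn fun p => SI (L p)).prod)
      ?_
    · rw [List.map_cons, List.prod_cons, h a (by simp),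
        ih (fun m hm => h m (List.mem_cons_of_mem _ hm)), Finset.sum_mul_sum]
      exact (Fintype.sum_prod_type _).symm.trans key
    · rintro ⟨H, L⟩
      show (qchoose c H.length • SI H) * ((∏ p, qchoose c (L p).length) • (List.ofFn fun p => SI (L p)).prod)
        = (∏ p : Fin (t.length + 1), qchoose c ((Fin.cons H L : ∀ p : Fin (a::t).length, Composition ((a::t).get p)) p).length) •
          (List.ofFn fun p : Fin (t.length + 1) => SI ((Fin.cons H L : ∀ p : Fin (a::t).length, Composition ((a::t).get p)) p)).prod
      rw [Fin.prod_univ_succ, List.ofFn_succ, List.prod_cons]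
      simp only [Fin.cons_zero, Fin.cons_succ, Function.comp]
      rw [smul_mul_assoc, mul_smul_comm, smul_smul]

theorem SI_multiplied_alphabet (n : ℕ) (hn : 0 < n) (k : ℤ)
    (ψ : FreeAlgebra ℚ ℕ →ₐ[ℚ] FreeAlgebra ℚ ℕ)
    (hψ : ∀ m : ℕ, 0 < m → ψ (FreeAlgebra.ι ℚ m) =
      ∑ H : Composition m, qchoose (k : ℚ) H.length • SI H)
    (I : Composition n) :
    ψ (SI I) =
      ∑ L : (∀ p : Fin I.blocks.length, Composition (I.blocks.get p)),
        (∏ p, qchoose (k : ℚ) (L p).length) • (List.ofFn fun p => SI (L p)).prod := by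
  rw [SI, map_list_prod, List.map_map]
  exact aux (k : ℚ) _ I.blocks fun m hm => hψ m (I.blocks_pos hm)
end

section
/- The right action of S_n on WQSym*_n by place permutation commutes with the internal product by elements of Sym_n: for any packed word u of length n, composition I of n, and σ ∈ S_n, N_{uσ} * S^I = (N_u * S^I)·σ, where S^I = Σ_{ev(v)=I} N_v and N_u·σ := N_{uσ}. -/
/-!
STATEMENT 15: The right action of S_n on WQSym*_n by place permutation commutes with the
internal (right) product by elements of Sym_n: for a packed word u of length n, a
composition I of n and σ ∈ S_n,
  N_{uσ} * S^I = (N_u * S^I)·σ,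
where S^I = ∑_{ev(v)=I} N_v, N_u * N_v = N_{pack(u|v)}, and N_u·σ := N_{uσ} with
(uσ)_i = u_{σ(i)}.

WQSym*_n is modelled as the free module on words (functions `Fin n → ℕ`), with N_w the
basis element `Finsupp.single w 1`; the (finite) sums over packed words of evaluation I
are expressed with `finsum`.
-/

open scoped Classical

/-- The evaluation of a word: the list (|v|_1, ..., |v|_{max v}) of multiplicities. -/
noncomputable def evList {n : ℕ} (v : Fin n → ℕ) : List ℕ :=
  (List.range (Finset.univ.sup v)).map fun k =>
    (Finset.univ.filter fun i => v i = k + 1).card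

lemma image_comp_perm {n : ℕ} (σ : Equiv.Perm (Fin n)) (f : Fin n → ℕ × ℕ) :
    (Finset.univ.image fun j => f (σ j)) = Finset.univ.image f := by
  ext p
  simp only [Finset.mem_image, Finset.mem_univ, true_and]
  constructor
  · rintro ⟨j, hj⟩; exact ⟨σ j, hj⟩
  · rintro ⟨j, hj⟩; exact ⟨σ.symm j, by simpa using hj⟩

lemma biPack_perm {n : ℕ} (u v : Fin n → ℕ) (σ : Equiv.Perm (Fin n)) :
    biPack (u ∘ σ) v = (biPack u (v ∘ σ.symm)) ∘ σ := by
  funext i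
  simp only [biPack, Function.comp]
  congr 1
  have himg : (Finset.univ.image fun j => ((u ∘ σ) j, v j))
      = Finset.univ.image fun j => (u j, v (σ.symm j)) := by
    have := image_comp_perm σ (fun j => (u j, v (σ.symm j)))
    simpa [Function.comp] using this
  rw [show (Finset.univ.image fun j => (u (σ j), v j))
      = Finset.univ.image fun j => (u j, v (σ.symm j)) from himg]
  congr 1
  funext p
  simp [Equiv.symm_apply_apply]

lemma isPacked_perm {n : ℕ} (v : Fin n → ℕ) (σ : Equiv.Perm (Fin n)) :
    IsPackedWord (v ∘ σ) ↔ IsPackedWord v := by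
  constructor
  · rintro ⟨h1, h2⟩
    refine ⟨fun i => by simpa using h1 (σ.symm i), fun i k hk hki => ?_⟩
    obtain ⟨j, hj⟩ := h2 (σ.symm i) k hk (by simpa using hki)
    exact ⟨σ j, hj⟩
  · rintro ⟨h1, h2⟩
    refine ⟨fun i => h1 (σ i), fun i k hk hki => ?_⟩
    obtain ⟨j, hj⟩ := h2 (σ i) k hk hki
    exact ⟨σ.symm j, by simpa using hj⟩

lemma evList_perm {n : ℕ} (v : Fin n → ℕ) (σ : Equiv.Perm (Fin n)) :
    evList (v ∘ σ) = evList v := by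
  unfold evList
  have hsup : Finset.univ.sup (v ∘ σ) = Finset.univ.sup v := by
    have : Finset.univ.sup (v ∘ σ) = (Finset.univ.image σ).sup v := by
      rw [Finset.sup_image]
    rw [this, Finset.image_univ_equiv σ]
  rw [hsup]
  congr 1
  funext k
  have : (Finset.univ.filter fun i => (v ∘ σ) i = k + 1).card
      = (Finset.univ.filter fun i => v i = k + 1).card := by
    apply Finset.card_bij (fun i _ => σ i)
    · intro a ha; simp only [Finset.mem_filter, Finset.mem_univ, true_and] at *; exact ha
    · intro a _ b _ h; exact σ.injective h
    · intro b hb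
      refine ⟨σ.symm b, ?_, by simp⟩
      simp only [Finset.mem_filter, Finset.mem_univ, true_and, Function.comp] at *
      simpa using hb
  exact this

theorem perm_action_commutes_with_internal_product
    (n : ℕ) (u : Fin n → ℕ) (hu : IsPackedWord u)
    (I : Composition n) (σ : Equiv.Perm (Fin n)) :
    (∑ᶠ v : Fin n → ℕ,
        if IsPackedWord v ∧ evList v = I.blocks
        then Finsupp.single (biPack (u ∘ σ) v) (1 : ℚ) else 0)
    = ∑ᶠ v : Fin n → ℕ,
        if IsPackedWord v ∧ evList v = I.blocks
        then Finsupp.single ((biPack u v) ∘ σ) (1 : ℚ) else 0 := by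
  apply finsum_eq_of_bijective (fun v => v ∘ σ.symm)
  · exact Function.Bijective.comp_right σ.symm.bijective
  · intro v
    have hp : IsPackedWord (v ∘ σ.symm) ↔ IsPackedWord v := isPacked_perm v σ.symm
    have he : evList (v ∘ σ.symm) = evList v := evList_perm v σ.symm
    rw [he, biPack_perm u v σ]
    by_cases h : IsPackedWord v ∧ evList v = I.blocks
    · rw [if_pos h, if_pos ⟨hp.mpr h.1, h.2⟩]
    · rw [if_neg h, if_neg (by rw [hp]; exact h)]
end

section
/- For packed words v and w with w a weak refinement of v, the set U(v,w) = {u packed : pack(u|v) = w} is a nonempty interval [u_0, w] in the refinement order on set compositions, where u_0 = u_0(v,w) is obtained from w by merging consecutive blocks p', p'' of w whenever all blocks of v meeting p' lie strictly to the left of those meeting p'', iterated until no merge is possible. -/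
/-- `Coarsens x y`: the set composition of x is coarser than that of y; equivalently
y refines x (each block of x is a union of consecutive blocks of y). -/
def Coarsens {n : ℕ} (x y : Fin n → ℕ) : Prop :=
  ∀ i j, y i ≤ y j → x i ≤ x j

/-!
`pack(u|v) = w` says that the lexicographic order of the biletters `(u i, v i)` is the order
of `w`, which holds iff `u` is coarser than `w` and, inside each block of `u`, `v` is ordered
like `w`. Call the boundary between consecutive blocks `k`, `k + 1` of `w` a cut when some
letter of `v` in block `k + 1` does not exceed one in block `k`. Since `w` weakly refines `v`,
`v` is ordered like `w` on a union of consecutive blocks of `w` iff no cut lies inside it. So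
`pack(u|v) = w` iff `u` is coarser than `w` and finer than `u₀`, the word obtained from `w` by
merging across every boundary that is not a cut.
-/

open Finset

theorem Finset.card_image_eq_card_image {ι α β : Type*} [DecidableEq α] [DecidableEq β]
    {s : Finset ι} {f : ι → α} {g : ι → β}
    (h : ∀ a ∈ s, ∀ b ∈ s, f a = f b ↔ g a = g b) : #(s.image f) = #(s.image g) := by
  set t := s.image fun a => (f a, g a)
  have hfst : Set.InjOn Prod.fst (t : Set (α × β)) := by
    simp only [t, coe_image, Set.InjOn, Set.mem_image, mem_coe]
    rintro _ ⟨a, ha, rfl⟩ _ ⟨b, hb, rfl⟩ hab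
    exact Prod.ext hab ((h a ha b hb).1 hab)
  have hsnd : Set.InjOn Prod.snd (t : Set (α × β)) := by
    simp only [t, coe_image, Set.InjOn, Set.mem_image, mem_coe]
    rintro _ ⟨a, ha, rfl⟩ _ ⟨b, hb, rfl⟩ hab
    exact Prod.ext ((h a ha b hb).2 hab) hab
  calc #(s.image f) = #(t.image Prod.fst) := by rw [image_image]; rfl
    _ = #t := card_image_of_injOn hfst
    _ = #(t.image Prod.snd) := (card_image_of_injOn hsnd).symm
    _ = #(s.image g) := by rw [image_image]; rfl

section Pack

variable {ι α β : Type*} [Fintype ι] [LinearOrder α] [LinearOrder β]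

def pack (f : ι → α) (i : ι) : ℕ := #{a ∈ univ.image f | a ≤ f i}

variable {f : ι → α} {i j : ι}

theorem pack_le_pack_of_le (h : f i ≤ f j) : pack f i ≤ pack f j :=
  card_le_card fun a ha => by
    simp only [mem_filter] at ha ⊢
    exact ⟨ha.1, ha.2.trans h⟩

theorem pack_lt_pack_of_lt (h : f i < f j) : pack f i < pack f j := by
  refine card_lt_card ((ssubset_iff_of_subset fun a ha => ?_).2 ⟨f j, ?_, ?_⟩)
  · simp only [mem_filter] at ha ⊢
    exact ⟨ha.1, ha.2.trans h.le⟩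
  · simp
  · simpa using h

theorem pack_le_pack_iff : pack f i ≤ pack f j ↔ f i ≤ f j :=
  ⟨fun h => le_of_not_gt fun hlt => (pack_lt_pack_of_lt hlt).not_ge h, pack_le_pack_of_le⟩

theorem pack_eq_pack_iff : pack f i = pack f j ↔ f i = f j := by
  simp only [le_antisymm_iff, pack_le_pack_iff]

theorem pack_congr {g : ι → β} (h : ∀ i j, f i ≤ f j ↔ g i ≤ g j) : pack f = pack g := by
  funext i
  simp only [pack, filter_image]
  rw [filter_congr fun j _ => h j i]
  exact card_image_eq_card_image fun a _ b _ => by simp only [le_antisymm_iff, h]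

end Pack

section PackedWord

variable {n : ℕ} {α : Type*} [LinearOrder α]

theorem isPackedWord_pack (f : Fin n → α) : IsPackedWord (pack f) := by
  refine ⟨fun i => card_pos.2 ⟨f i, by simp⟩, fun i k hk hki => ?_⟩
  -- the `k`-th smallest value of `f` not exceeding `f i` has rank `k`
  set S : Finset α := {a ∈ univ.image f | a ≤ f i}
  have hS : ∀ {a}, a ∈ S ↔ (∃ j, f j = a) ∧ a ≤ f i := by simp [S]
  set e := S.orderEmbOfFin rfl
  have he : ∀ m, e m ∈ S := S.orderEmbOfFin_mem rfl
  let m : Fin #S := ⟨k - 1, by have : #S = pack f i := rfl; omega⟩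
  obtain ⟨j, hj⟩ := (hS.1 (he m)).1
  have hset : ({a ∈ univ.image f | a ≤ f j} : Finset α) = (Iic m).map e.toEmbedding := by
    ext a
    simp only [mem_filter, mem_image, mem_univ, true_and, mem_map, mem_Iic, hj]
    constructor
    · rintro ⟨⟨l, rfl⟩, hl⟩
      obtain ⟨m', hm'⟩ : f l ∈ Set.range e := by
        rw [range_orderEmbOfFin]
        exact hS.2 ⟨⟨l, rfl⟩, hl.trans (hS.1 (he m)).2⟩
      exact ⟨m', e.le_iff_le.1 (hm' ▸ hl), hm'⟩
    · rintro ⟨m', hm', rfl⟩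
      exact ⟨(hS.1 (he m')).1, e.le_iff_le.2 hm'⟩
  refine ⟨j, ?_⟩
  rw [pack, hset, card_map, Fin.card_Iic]
  exact Nat.sub_add_cancel hk

theorem pack_eq_self {w : Fin n → ℕ} (hw : IsPackedWord w) : pack w = w := by
  funext i
  have hset : ({a ∈ univ.image w | a ≤ w i} : Finset ℕ) = Icc 1 (w i) := by
    ext a
    simp only [mem_filter, mem_image, mem_univ, true_and, mem_Icc]
    exact ⟨fun ⟨⟨j, hj⟩, h⟩ => ⟨hj ▸ hw.1 j, h⟩, fun ⟨h1, h2⟩ => ⟨hw.2 i a h1 h2, h2⟩⟩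
  rw [pack, hset, Nat.card_Icc, Nat.add_sub_cancel]

theorem pack_eq_iff {f : Fin n → α} {w : Fin n → ℕ} (hw : IsPackedWord w) :
    pack f = w ↔ ∀ i j, f i ≤ f j ↔ w i ≤ w j := by
  refine ⟨fun h i j => by rw [← h, pack_le_pack_iff], fun h => ?_⟩
  rw [pack_congr h, pack_eq_self hw]

theorem biPack_eq_pack (u v : Fin n → ℕ) : biPack u v = pack fun i => toLex (u i, v i) := by
  funext i
  have himage : univ.image (fun j => toLex (u j, v j)) =
      (univ.image fun j => (u j, v j)).map toLex.toEmbedding := by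
    simp [map_eq_image, image_image, Function.comp_def]
  rw [pack, himage, filter_map, card_map]
  simp only [biPack, Function.comp_def, Equiv.toEmbedding_apply, Prod.Lex.toLex_le_toLex]

end PackedWord

section Merge

variable {n : ℕ} {u v w : Fin n → ℕ}

theorem lex_le_iff_le_iff :
    (∀ i j, toLex (u i, v i) ≤ toLex (u j, v j) ↔ w i ≤ w j) ↔
      Coarsens u w ∧ ∀ i j, u i = u j → (v i ≤ v j ↔ w i ≤ w j) := by
  simp only [Prod.Lex.toLex_le_toLex]
  refine ⟨fun h => ⟨fun i j hij => ?_, fun i j hu => ?_⟩, fun ⟨hc, hu⟩ i j => ?_⟩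
  · rcases (h i j).2 hij with hlt | ⟨heq, -⟩
    exacts [hlt.le, heq.le]
  · simpa [hu] using h i j
  · constructor
    · rintro (hlt | ⟨heq, hv⟩)
      · exact le_of_not_gt fun hji => hlt.not_ge (hc j i hji.le)
      · exact (hu i j heq).1 hv
    · intro hij
      rcases (hc i j hij).lt_or_eq with hlt | heq
      · exact .inl hlt
      · exact .inr ⟨heq, (hu i j heq).2 hij⟩

/-- Blocks `k` and `k + 1` of `w` may not be merged in forming `u₀(v, w)`. -/
def IsCut (v w : Fin n → ℕ) (k : ℕ) : Prop :=
  ∃ i j, w i = k ∧ w j = k + 1 ∧ v j ≤ v i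

instance (v w : Fin n → ℕ) : DecidablePred (IsCut v w) := fun _ => by
  unfold IsCut; infer_instance

def cutCount (v w : Fin n → ℕ) (m : ℕ) : ℕ := #{k ∈ range m | IsCut v w k}

theorem cutCount_mono (v w : Fin n → ℕ) : Monotone (cutCount v w) := fun _ _ hab =>
  card_le_card (filter_subset_filter _ (range_subset_range.2 hab))

theorem cutCount_succ_of_isCut {k : ℕ} (hk : IsCut v w k) :
    cutCount v w (k + 1) = cutCount v w k + 1 := by
  rw [cutCount, cutCount, range_add_one, filter_insert, if_pos hk, card_insert_of_notMem]
  simp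

theorem not_isCut_of_cutCount_le {a b k : ℕ} (hab : cutCount v w b ≤ cutCount v w a)
    (hak : a ≤ k) (hkb : k < b) : ¬ IsCut v w k := fun hk => by
  have := cutCount_succ_of_isCut hk
  have := cutCount_mono v w hak
  have := cutCount_mono v w (show k + 1 ≤ b from hkb)
  omega

theorem cutCount_le_of_forall_not_isCut {a b : ℕ} (h : ∀ k, a ≤ k → k < b → ¬ IsCut v w k) :
    cutCount v w b ≤ cutCount v w a := by
  refine card_le_card fun k hk => ?_
  simp only [mem_filter, mem_range] at hk ⊢
  exact ⟨not_le.1 fun hak => h k hak hk.1 hk.2, hk.2⟩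

theorem lt_of_forall_not_isCut (hw : IsPackedWord w) {i j : Fin n} (hij : w i < w j)
    (h : ∀ k, w i ≤ k → k < w j → ¬ IsCut v w k) : v i < v j := by
  suffices ∀ m, w i < m → ∀ j, w j = m → (∀ k, w i ≤ k → k < m → ¬ IsCut v w k) → v i < v j from
    this _ hij j rfl h
  intro m hm
  induction m, hm using Nat.le_induction with
  | base => exact fun j hj h => not_le.1 fun hji => h (w i) le_rfl (by omega) ⟨i, j, rfl, hj, hji⟩
  | succ m hm ih =>
    intro j hj h
    obtain ⟨l, hl⟩ := hw.2 j m (by omega) (by omega)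
    have hil : v i < v l := ih l hl fun k hk hkm => h k hk (by omega)
    have hlj : v l < v j := not_le.1 fun hjl => h m (by omega) (by omega) ⟨l, j, hl, hj, hjl⟩
    exact hil.trans hlj

/-- The paper's `u₀(v, w)`. -/
def mergeWord (v w : Fin n → ℕ) : Fin n → ℕ :=
  pack fun i => cutCount v w (w i)

theorem coarsens_mergeWord : Coarsens (mergeWord v w) w := fun _ _ hij =>
  pack_le_pack_of_le (cutCount_mono v w hij)

theorem le_iff_le_of_mergeWord_eq (hw : IsPackedWord w) (hwr : ∀ i j, w i = w j → v i = v j)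
    {i j : Fin n} (hij : mergeWord v w i = mergeWord v w j) : v i ≤ v j ↔ w i ≤ w j := by
  replace hij : cutCount v w (w i) = cutCount v w (w j) :=
    pack_eq_pack_iff (f := fun l => cutCount v w (w l)) |>.1 hij
  rcases lt_trichotomy (w i) (w j) with hlt | heq | hgt
  · exact iff_of_true
      (lt_of_forall_not_isCut hw hlt fun k => not_isCut_of_cutCount_le hij.ge).le hlt.le
  · exact iff_of_true (hwr i j heq).le heq.le
  · exact iff_of_false
      (lt_of_forall_not_isCut hw hgt fun k => not_isCut_of_cutCount_le hij.le).not_ge hgt.not_ge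

theorem coarsens_mergeWord_iff (hw : IsPackedWord w) (hwr : ∀ i j, w i = w j → v i = v j)
    (hu : Coarsens u w) :
    Coarsens (mergeWord v w) u ↔ ∀ i j, u i = u j → (v i ≤ v j ↔ w i ≤ w j) := by
  refine ⟨fun h i j hij => le_iff_le_of_mergeWord_eq hw hwr ?_, fun h i j hij => ?_⟩
  · exact (h i j hij.le).antisymm (h j i hij.ge)
  rcases le_or_gt (w i) (w j) with hle | hlt
  · exact coarsens_mergeWord i j hle
  -- a cut between `w j` and `w i` would lie inside the block of `u` containing `i` and `j`
  refine pack_le_pack_of_le <|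
    cutCount_le_of_forall_not_isCut fun k hjk hki ⟨a, b, ha, hb, hba⟩ => ?_
  have hua : u j ≤ u a := hu j a (by omega)
  have hab : u a ≤ u b := hu a b (by omega)
  have hbi : u b ≤ u i := hu b i (by omega)
  have := (h b a (by omega)).1 hba
  omega

theorem biPack_eq_iff_coarsens (hw : IsPackedWord w) (hwr : ∀ i j, w i = w j → v i = v j) :
    biPack u v = w ↔ Coarsens (mergeWord v w) u ∧ Coarsens u w := by
  rw [biPack_eq_pack, pack_eq_iff hw, lex_le_iff_le_iff]
  exact ⟨fun ⟨hu, h⟩ => ⟨(coarsens_mergeWord_iff hw hwr hu).2 h, hu⟩,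
    fun ⟨h, hu⟩ => ⟨hu, (coarsens_mergeWord_iff hw hwr hu).1 h⟩⟩

end Merge

theorem U_is_interval_general (n : ℕ) (v w : Fin n → ℕ)
    (hw : IsPackedWord w)
    (hwr : ∀ i j, w i = w j → v i = v j) :
    ∃ u₀ : Fin n → ℕ, IsPackedWord u₀ ∧ Coarsens u₀ w ∧ biPack u₀ v = w ∧
      ∀ u : Fin n → ℕ, IsPackedWord u →
        (biPack u v = w ↔ (Coarsens u₀ u ∧ Coarsens u w)) :=
  ⟨mergeWord v w, isPackedWord_pack _, coarsens_mergeWord,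
    (biPack_eq_iff_coarsens hw hwr).2 ⟨fun _ _ => id, coarsens_mergeWord⟩,
    fun _ _ => biPack_eq_iff_coarsens hw hwr⟩

theorem U_is_interval (n : ℕ) (v w : Fin n → ℕ)
    (hv : IsPackedWord v) (hw : IsPackedWord w)
    (hwr : ∀ i j, w i = w j → v i = v j) :
    ∃ u₀ : Fin n → ℕ, IsPackedWord u₀ ∧ Coarsens u₀ w ∧ biPack u₀ v = w ∧
      ∀ u : Fin n → ℕ, IsPackedWord u →
        (biPack u v = w ↔ (Coarsens u₀ u ∧ Coarsens u w)) :=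
  U_is_interval_general n v w hw hwr
end

section
/- Goldberg's formula as the coefficient of t in its t-analogue: the coefficient of t in binom(t + s - r, k) equals (-1)^{k-s+r-1} (s-r)!(k-s+r-1)!/k! = ∫_{-1}^0 t^{k} · t^{r-1}(1+t)^{s-r} dt / t^{s}, for integers 1 ≤ r ≤ s ≤ k. -/
/-!
With `m = s - r` and `n = k - s + r - 1`, so that `k = m + 1 + n`, the factor `j = m` of the
product defining `binomPoly` is `t` itself. Hence the coefficient of `t` is the value at `0` of
the remaining factors, `∏_{j<m} (m - j) · ∏_{i<n} (-(i + 1)) = (-1)^n m! n!`. The substitution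
`t = x - 1` turns the integral into `(-1)^n` times the Beta integral `B(m + 1, n + 1)`, which
Mathlib evaluates through the Gamma function as `m! n! / (m + n + 1)!`.
-/

open Polynomial

/-- The polynomial binom(t + s - r, k) in the variable t (over ℝ). -/
noncomputable def binomPoly (s r k : ℕ) : Polynomial ℝ :=
  Polynomial.C (1 / (Nat.factorial k : ℝ)) *
    ∏ j ∈ Finset.range k, (Polynomial.X + Polynomial.C ((s : ℝ) - (r : ℝ) - (j : ℝ)))

open Nat Finset

theorem integral_pow_mul_one_sub_pow (m n : ℕ) :
    ∫ x in (0 : ℝ)..1, x ^ m * (1 - x) ^ n = m ! * n ! / (m + n + 1)! := by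
  have hbeta : Complex.betaIntegral (m + 1) (n + 1) = ∫ x in (0 : ℝ)..1, x ^ m * (1 - x) ^ n := by
    rw [Complex.betaIntegral, ← intervalIntegral.integral_ofReal]
    push_cast
    simp only [add_sub_cancel_right, Complex.cpow_natCast]
  rw [Complex.betaIntegral_eq_Gamma_mul_div _ _ (by simp; positivity) (by simp; positivity),
    show (m + 1 + (n + 1) : ℂ) = ↑(m + n + 1) + 1 by push_cast; ring] at hbeta
  simp only [Complex.Gamma_nat_eq_factorial] at hbeta
  apply Complex.ofReal_injective
  rw [← hbeta]
  push_cast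
  rfl

theorem integral_neg_one_zero_pow_mul_one_add_pow (m n : ℕ) :
    ∫ t in (-1 : ℝ)..0, t ^ n * (1 + t) ^ m = (-1) ^ n * (m ! * n ! / (m + n + 1)!) := by
  have hshift := intervalIntegral.integral_comp_sub_right (a := 0) (b := 1)
    (fun t : ℝ => t ^ n * (1 + t) ^ m) 1
  norm_num at hshift
  rw [← hshift, ← integral_pow_mul_one_sub_pow, ← intervalIntegral.integral_const_mul]
  congr 1 with x
  rw [← neg_sub, neg_pow]
  ring

theorem coeff_one_mul_X_mul {R : Type*} [CommSemiring R] (p q : R[X]) :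
    (p * X * q).coeff 1 = p.eval 0 * q.eval 0 := by
  rw [show p * X * q = X * (p * q) by ring, coeff_X_mul, coeff_zero_eq_eval_zero, eval_mul]

section ProdRange

variable {R : Type*} [CommRing R]

theorem prod_range_natCast_sub_self (m : ℕ) : ∏ j ∈ range m, ((m : R) - j) = m ! := by
  rw [← Nat.descFactorial_self, Nat.descFactorial_eq_prod_range, Nat.cast_prod]
  exact prod_congr rfl fun j hj => by rw [Nat.cast_sub (mem_range.1 hj).le]

theorem prod_range_natCast_sub_add_one_add (m n : ℕ) :
    ∏ i ∈ range n, ((m : R) - ↑(m + 1 + i)) = (-1) ^ n * n ! :=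
  calc ∏ i ∈ range n, ((m : R) - ↑(m + 1 + i)) = ∏ i ∈ range n, -((i : R) + 1) :=
        prod_congr rfl fun i _ => by push_cast; ring
    _ = (-1) ^ n * n ! := by
        rw [prod_neg, card_range, ← prod_range_add_one_eq_factorial]; push_cast; rfl

theorem coeff_one_prod_range_X_add_C_natCast_sub (m n : ℕ) :
    (∏ j ∈ range (m + 1 + n), (X + C ((m : R) - j))).coeff 1 = (-1) ^ n * (m ! * n ! : R) := by
  rw [prod_range_add, prod_range_succ, sub_self, C_0, add_zero, coeff_one_mul_X_mul,
    eval_prod, eval_prod]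
  simp only [eval_add, eval_X, eval_C, zero_add]
  rw [prod_range_natCast_sub_self, prod_range_natCast_sub_add_one_add]
  ring

end ProdRange

theorem goldberg_linear_coefficient (r s k : ℕ)
    (hr : 1 ≤ r) (hs : r ≤ s) (hk : s ≤ k) :
    (binomPoly s r k).coeff 1 =
        (-1 : ℝ) ^ (k - s + r - 1) *
          ((Nat.factorial (s - r) : ℝ) * (Nat.factorial (k - s + r - 1) : ℝ) /
            (Nat.factorial k : ℝ)) ∧
    (binomPoly s r k).coeff 1 =
        ∫ t in (-1 : ℝ)..0, t ^ (k - s + r - 1) * (1 + t) ^ (s - r) := by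
  set m := s - r
  set n := k - s + r - 1
  have hk_eq : k = m + 1 + n := by omega
  have hcoeff : (binomPoly s r k).coeff 1 = (-1) ^ n * ((m ! * n ! : ℝ) / k !) := by
    rw [binomPoly, coeff_C_mul, ← Nat.cast_sub hs, hk_eq, coeff_one_prod_range_X_add_C_natCast_sub]
    ring
  refine ⟨hcoeff, ?_⟩
  rw [hcoeff, integral_neg_one_zero_pow_mul_one_add_pow, hk_eq, add_right_comm]
end
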